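/- Let Z = (E, G, τ, σ) be a zip datum and x ∈ G. For y ∈ G_1^x = τ(E), the Z_1^x-equivalence class of y, multiplied on the right by x, equals the intersection of the Z-equivalence class of yx with G_1^x · x: o_{Z_1^x}(y) · x = o_Z(yx) ∩ (τ(E) · x). -/
import Mathlib


variable {E G : Type*} [Group E] [Group G]

/-- The conjugated homomorphism ˣσ : e ↦ x σ(e) x⁻¹. -/
def conjHom (x : G) (σ : E →* G) : E →* G :=
  ((MulAut.conj x).toMonoidHom).comp σ

/-- The first refinement group E₁ = σ⁻¹(τ(E)). -/
def Eone (τ σ : E →* G) : Subgroup E :=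
  Subgroup.comap σ (Subgroup.map τ ⊤)

/-- E₁ˣ = (ˣσ)⁻¹(τ(E)). -/
def EoneX (τ σ : E →* G) (x : G) : Subgroup E :=
  Eone τ (conjHom x σ)

/-- The iterated refinements Eᵢ. -/
def Eseq (τ σ : E →* G) : ℕ → Subgroup E
  | 0 => ⊤
  | n + 1 => Subgroup.comap σ (Subgroup.map τ (Eseq τ σ n))

/-- The iterated refinements Gᵢ. -/
def Gseq (τ σ : E →* G) : ℕ → Subgroup G
  | 0 => ⊤
  | n + 1 => Subgroup.map τ (Eseq τ σ n)

/-- E∞: the largest subgroup F of E with σ(F) ⊆ τ(F). -/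
def Einf (τ σ : E →* G) : Subgroup E :=
  sSup {F : Subgroup E | Subgroup.map σ F ≤ Subgroup.map τ F}

/-- G∞ = τ(E∞). -/
def Ginf (τ σ : E →* G) : Subgroup G :=
  Subgroup.map τ (Einf τ σ)

/-- E∞ˣ: the largest subgroup F of E with ˣσ(F) ⊆ τ(F). -/
def EinfX (τ σ : E →* G) (x : G) : Subgroup E :=
  Einf τ (conjHom x σ)

/-- G∞ˣ = τ(E∞ˣ). -/
def GinfX (τ σ : E →* G) (x : G) : Subgroup G :=
  Subgroup.map τ (EinfX τ σ x)

/-- The ∼_Z-equivalence class of x : all τ(e) g x σ(e)⁻¹ with e ∈ E, g ∈ G∞ˣ. -/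
def zipOrbit (τ σ : E →* G) (x : G) : Set G :=
  {y | ∃ e : E, ∃ g ∈ GinfX τ σ x, y = τ e * g * x * (σ e)⁻¹}

/-- G₁ = τ(E) as a subgroup of G. -/
def Gone (τ : E →* G) : Subgroup G := Subgroup.map τ ⊤

/-- The restriction τ : E₁ˣ →* G₁ of the refined zip datum Z₁ˣ. -/
def tauOne (τ σ : E →* G) (x : G) : (EoneX τ σ x) →* (Gone τ) :=
  MonoidHom.codRestrict (τ.comp (EoneX τ σ x).subtype) (Gone τ)
    (fun e => ⟨e.1, trivial, rfl⟩)

/-- The restriction ˣσ : E₁ˣ →* G₁ of the refined zip datum Z₁ˣ. -/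
def sigmaOne (τ σ : E →* G) (x : G) : (EoneX τ σ x) →* (Gone τ) :=
  MonoidHom.codRestrict ((conjHom x σ).comp (EoneX τ σ x).subtype) (Gone τ)
    (fun e => e.2)


lemma einf_spec' (τ σ : E →* G) : Subgroup.map σ (Einf τ σ) ≤ Subgroup.map τ (Einf τ σ) := by
  rw [Einf, sSup_eq_iSup', Subgroup.map_iSup]
  refine iSup_le fun F => F.2.trans ?_
  exact Subgroup.map_mono (le_trans (le_iSup _ F) (by rw [← sSup_eq_iSup']))

lemma einf_mem' {τ σ : E →* G} {e : E} (he : e ∈ Einf τ σ) :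
    σ e ∈ Subgroup.map τ (Einf τ σ) :=
  einf_spec' τ σ ⟨e, he, rfl⟩

lemma einf_le' {τ σ : E →* G} {F : Subgroup E}
    (h : Subgroup.map σ F ≤ Subgroup.map τ F) : F ≤ Einf τ σ :=
  le_sSup h

lemma mem_gone {τ : E →* G} (e : E) : τ e ∈ Gone τ := ⟨e, trivial, rfl⟩

/-- The key correspondence: E∞ of the refined datum at y, viewed in E,
equals E∞ of the original datum at y*x. -/
lemma einfX_corr (τ σ : E →* G) (x : G) (y : Gone τ) :
    Subgroup.map (EoneX τ σ x).subtype
        (EinfX (tauOne τ σ x) (sigmaOne τ σ x) y) = EinfX τ σ ((y : G) * x) := by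
  set E₁ := EoneX τ σ x
  set E' := EinfX (tauOne τ σ x) (sigmaOne τ σ x) y with hE'
  set A := EinfX τ σ ((y : G) * x) with hA
  obtain ⟨y0, -, hy0⟩ := y.2
  apply le_antisymm
  · -- map subtype E' ≤ A
    refine einf_le' ?_
    rintro _ ⟨_, ⟨e, he, rfl⟩, rfl⟩
    have h1 := einf_mem' (τ := tauOne τ σ x) (σ := conjHom y (sigmaOne τ σ x)) he
    obtain ⟨f, hf, hfe⟩ := h1
    refine ⟨(f : E), ⟨f, hf, rfl⟩, ?_⟩
    -- goal : τ ↑f = conjHom (y*x) σ ↑e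
    calc τ (f : E) = ((tauOne τ σ x f : Gone τ) : G) := rfl
      _ = ((conjHom y (sigmaOne τ σ x) e : Gone τ) : G) := by rw [hfe]
      _ = (y : G) * (x * σ (e : E) * x⁻¹) * (y : G)⁻¹ := rfl
      _ = ((y : G) * x) * σ (e : E) * ((y : G) * x)⁻¹ := by group
      _ = conjHom ((y : G) * x) σ (E₁.subtype e) := rfl
  · -- A ≤ map subtype E'
    have hA1 : A ≤ E₁ := by
      intro e he
      obtain ⟨f, -, hf⟩ := einf_mem' (τ := τ) (σ := conjHom ((y : G) * x) σ) he
      show conjHom x σ e ∈ Subgroup.map τ ⊤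
      have hv : (conjHom x σ e : G) = (y : G)⁻¹ * τ f * (y : G) := by
        have h2 : τ f = ((y : G) * x) * σ e * ((y : G) * x)⁻¹ := hf
        show x * σ e * x⁻¹ = (y : G)⁻¹ * τ f * (y : G)
        rw [h2]; group
      rw [hv, ← hy0]
      exact Subgroup.mul_mem _ (Subgroup.mul_mem _ (Subgroup.inv_mem _ (mem_gone y0))
        (mem_gone f)) (mem_gone y0)
    have hA' : Subgroup.comap E₁.subtype A ≤ E' := by
      refine einf_le' ?_
      rintro _ ⟨e, he, rfl⟩
      obtain ⟨f, hf, hfe⟩ := einf_mem' (τ := τ) (σ := conjHom ((y : G) * x) σ) he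
      refine ⟨⟨f, hA1 hf⟩, hf, ?_⟩
      apply Subtype.ext
      calc ((tauOne τ σ x ⟨f, hA1 hf⟩ : Gone τ) : G) = τ f := rfl
        _ = conjHom ((y : G) * x) σ (E₁.subtype e) := hfe
        _ = ((y : G) * x) * σ (e : E) * ((y : G) * x)⁻¹ := rfl
        _ = (y : G) * (x * σ (e : E) * x⁻¹) * (y : G)⁻¹ := by group
        _ = ((conjHom y (sigmaOne τ σ x) e : Gone τ) : G) := rfl
    intro e he
    exact ⟨⟨e, hA1 he⟩, hA' he, rfl⟩

lemma ginfX_corr (τ σ : E →* G) (x : G) (y : Gone τ) (g : G) :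
    g ∈ GinfX τ σ ((y : G) * x) ↔
      ∃ h : Gone τ, h ∈ GinfX (tauOne τ σ x) (sigmaOne τ σ x) y ∧ (h : G) = g := by
  rw [GinfX, ← einfX_corr τ σ x y]
  constructor
  · rintro ⟨_, ⟨e, he, rfl⟩, rfl⟩
    exact ⟨tauOne τ σ x e, ⟨e, he, rfl⟩, rfl⟩
  · rintro ⟨h, ⟨e, he, rfl⟩, rfl⟩
    exact ⟨(e : E), ⟨e, he, rfl⟩, rfl⟩

/-- o_{Z₁ˣ}(y) · x = o_Z(yx) ∩ (τ(E) · x). -/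
theorem zip_refinement_orbit_eq (τ σ : E →* G) (x : G) (y : Gone τ) :
    {w : G | ∃ z ∈ zipOrbit (tauOne τ σ x) (sigmaOne τ σ x) y, w = (z : G) * x} =
      zipOrbit τ σ ((y : G) * x) ∩ {w : G | ∃ g ∈ Gone τ, w = g * x} := by
  ext w
  constructor
  · rintro ⟨z, ⟨e, g, hg, hz⟩, rfl⟩
    constructor
    · refine ⟨(e : E), (g : G), (ginfX_corr τ σ x y (g : G)).2 ⟨g, hg, rfl⟩, ?_⟩
      have hzv : (z : G) = τ (e : E) * (g : G) * (y : G) * (x * σ (e : E) * x⁻¹)⁻¹ := by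
        rw [hz]; rfl
      rw [hzv]; group
    · exact ⟨(z : G), z.2, rfl⟩
  · rintro ⟨⟨e, g, hg, hw⟩, ⟨h, hh, rfl⟩⟩
    have hgone : g ∈ Gone τ := by
      obtain ⟨f, -, hf⟩ := hg
      exact hf ▸ mem_gone f
    have hx : h = τ e * g * (y : G) * (x * σ e * x⁻¹)⁻¹ := by
      have h2 : h = (h * x) * x⁻¹ := by group
      rw [h2, hw]; group
    have heE : e ∈ EoneX τ σ x := by
      show conjHom x σ e ∈ Subgroup.map τ ⊤
      have hv : (conjHom x σ e : G) = h⁻¹ * (τ e * g * (y : G)) := by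
        show x * σ e * x⁻¹ = h⁻¹ * (τ e * g * (y : G))
        rw [hx]; group
      rw [hv]
      exact Subgroup.mul_mem _ (Subgroup.inv_mem _ hh)
        (Subgroup.mul_mem _ (Subgroup.mul_mem _ (mem_gone e) hgone) y.2)
    obtain ⟨g', hg', hg'v⟩ := (ginfX_corr τ σ x y g).1 hg
    refine ⟨tauOne τ σ x ⟨e, heE⟩ * g' * y * (sigmaOne τ σ x ⟨e, heE⟩)⁻¹,
      ⟨⟨e, heE⟩, g', hg', rfl⟩, ?_⟩
    show h * x = (τ e * (g' : G) * (y : G) * (x * σ e * x⁻¹)⁻¹) * x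
    rw [hg'v, ← hx]
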